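/- Let Q be a finite acyclic quiver without parallel paths, A = kQ, and V_i finite-dimensional vector spaces. Then End_{A \otimes A^{op}}(N(V_*)) \cong \bigoplus_{\alpha: i \to j} End_k(V_i), where N(V_*) = \bigoplus_{\alpha: i \to j} A e_j \otimes V_i \otimes e_i A. -/

import Mathlib

/- STATEMENT 8: Let Q be a finite acyclic quiver without parallel paths, A = kQ, and V_i
finite-dimensional vector spaces. Then
  End_{A ⊗ A^op}(N(V_*)) ≅ ⊕_{α : i → j} End_k(V_i)   as k-algebras,
where N(V_*) = ⊕_{α : i → j} A e_j ⊗ V_i ⊗ e_i A.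

The bimodule N(V_*) is modeled by its components
N(V_*)_{a,b} = ⊕_{(α : i→j, ω : j⇝a, ω' : b⇝i)} V_i with structure maps the inclusions of
direct summands; bimodule endomorphisms are families of linear maps on components commuting
with all structure maps, with multiplication given by componentwise composition. -/

open Quiver DirectSum

set_option synthInstance.maxHeartbeats 400000
set_option maxHeartbeats 1000000

/-- The set of arrows of `Q`. -/
abbrev Arr (Q : Type) [Quiver.{0} Q] : Type := Σ i j : Q, i ⟶ j

/-- Index of the direct summands of `N(V_*)_{a,b}`. -/
abbrev NIdx (Q : Type) [Quiver.{0} Q] (a b : Q) : Type :=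
  Σ ar : Arr Q, Path ar.2.1 a × Path b ar.1

/-- The component `N(V_*)_{a,b}`. -/
abbrev Nc (F : Type) [Field F] (Q : Type) [Quiver.{0} Q]
    (V : Q → Type) [∀ p, AddCommGroup (V p)] [∀ p, Module F (V p)] (a b : Q) : Type :=
  ⨁ (t : NIdx Q a b), V t.1.1

open scoped Classical in
/-- Left structure map of `N(V_*)` along `γ : a ⟶ a'`. -/
noncomputable def NlAct (F : Type) [Field F] (Q : Type) [Quiver.{0} Q]
    (V : Q → Type) [∀ p, AddCommGroup (V p)] [∀ p, Module F (V p)]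
    {a a' : Q} (γ : a ⟶ a') (b : Q) : Nc F Q V a b →ₗ[F] Nc F Q V a' b :=
  DirectSum.toModule F (NIdx Q a b) _ fun t =>
    DirectSum.lof F (NIdx Q a' b) (fun s => V s.1.1) ⟨t.1, t.2.1.cons γ, t.2.2⟩

open scoped Classical in
/-- Right structure map of `N(V_*)` along `δ : b' ⟶ b`. -/
noncomputable def NrAct (F : Type) [Field F] (Q : Type) [Quiver.{0} Q]
    (V : Q → Type) [∀ p, AddCommGroup (V p)] [∀ p, Module F (V p)]
    (a : Q) {b b' : Q} (δ : b' ⟶ b) : Nc F Q V a b →ₗ[F] Nc F Q V a b' :=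
  DirectSum.toModule F (NIdx Q a b) _ fun t =>
    DirectSum.lof F (NIdx Q a b') (fun s => V s.1.1) ⟨t.1, t.2.1, (δ.toPath).comp t.2.2⟩

/-- The space of bimodule endomorphisms of `N(V_*)`. -/
noncomputable def bimodEndN (F : Type) [Field F] (Q : Type) [Quiver.{0} Q]
    (V : Q → Type) [∀ p, AddCommGroup (V p)] [∀ p, Module F (V p)] :
    Submodule F (∀ a b : Q, Nc F Q V a b →ₗ[F] Nc F Q V a b) where
  carrier := {f |
    (∀ (a a' b : Q) (γ : a ⟶ a'),
      (NlAct F Q V γ b).comp (f a b) = (f a' b).comp (NlAct F Q V γ b)) ∧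
    (∀ (a b b' : Q) (δ : b' ⟶ b),
      (NrAct F Q V a δ).comp (f a b) = (f a b').comp (NrAct F Q V a δ))}
  add_mem' := by
    rintro f g ⟨hf1, hf2⟩ ⟨hg1, hg2⟩
    refine ⟨fun a a' b γ => ?_, fun a b b' δ => ?_⟩
    · simp [LinearMap.comp_add, LinearMap.add_comp, hf1 a a' b γ, hg1 a a' b γ]
    · simp [LinearMap.comp_add, LinearMap.add_comp, hf2 a b b' δ, hg2 a b b' δ]
  zero_mem' := by
    refine ⟨fun a a' b γ => ?_, fun a b b' δ => ?_⟩ <;> simp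
  smul_mem' := by
    rintro c f ⟨h1, h2⟩
    refine ⟨fun a a' b γ => ?_, fun a b b' δ => ?_⟩
    · simp [LinearMap.comp_smul, LinearMap.smul_comp, h1 a a' b γ]
    · simp [LinearMap.comp_smul, LinearMap.smul_comp, h2 a b b' δ]

/-! A bimodule endomorphism commutes with the actions of paths on both sides, and the
summand of `N_{a,b}` indexed by `(α : i → j, ω : j ⇝ a, ω' : b ⇝ i)` is the image, under the
actions of `ω` and `ω'`, of the summand of `N_{j,i}` indexed by `(α, nil, nil)`. Without
parallel paths the latter is the only summand of `N_{j,i}`: any index `(α', ω, ω')` gives a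
path `ω' α' ω` from `i` to `j`, which must be `α` itself. So an endomorphism is the same as an
endomorphism of `V_i` for every arrow `α : i → j`, acting diagonally on all summands. -/

namespace DirectSum

theorem eq_lof_of_subsingleton (R : Type*) [Semiring R] {ι : Type*} [DecidableEq ι]
    [Subsingleton ι] {M : ι → Type*} [∀ i, AddCommMonoid (M i)] [∀ i, Module R (M i)]
    (i : ι) (x : ⨁ i, M i) : x = lof R ι M i (x i) := by
  refine ext_component R fun s => ?_
  obtain rfl := Subsingleton.elim s i
  rw [component.lof_self]
  rfl

end DirectSum

section BimodEndN

open scoped Classical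

variable {F : Type} [Field F] {Q : Type} [Quiver.{0} Q]
  {V : Q → Type} [∀ p, AddCommGroup (V p)] [∀ p, Module F (V p)]

local notation "ιN" => DirectSum.lof F (NIdx Q _ _) (fun s => V (Sigma.fst (Sigma.fst s)))

@[simp]
lemma NlAct_lof {a a' : Q} (γ : a ⟶ a') (b : Q) (t : NIdx Q a b) (v : V t.1.1) :
    NlAct F Q V γ b (ιN t v) = ιN ⟨t.1, t.2.1.cons γ, t.2.2⟩ v := by
  simp [NlAct]

@[simp]
lemma NrAct_lof (a : Q) {b b' : Q} (δ : b' ⟶ b) (t : NIdx Q a b) (v : V t.1.1) :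
    NrAct F Q V a δ (ιN t v) = ιN ⟨t.1, t.2.1, δ.toPath.comp t.2.2⟩ v := by
  simp [NrAct]

variable (F V) in
noncomputable def NlPathAct :
    ∀ {a a' : Q}, Path a a' → ∀ b : Q, Nc F Q V a b →ₗ[F] Nc F Q V a' b
  | _, _, Path.nil, _ => LinearMap.id
  | _, _, Path.cons p γ, b => (NlAct F Q V γ b).comp (NlPathAct p b)

variable (F V) in
noncomputable def NrPathAct (a : Q) :
    ∀ {b' b : Q}, Path b' b → Nc F Q V a b →ₗ[F] Nc F Q V a b'
  | _, _, Path.nil => LinearMap.id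
  | _, _, Path.cons q δ => (NrPathAct a q).comp (NrAct F Q V a δ)

lemma NlPathAct_lof {a a' : Q} (p : Path a a') (b : Q) (t : NIdx Q a b) (v : V t.1.1) :
    NlPathAct F V p b (ιN t v) = ιN ⟨t.1, t.2.1.comp p, t.2.2⟩ v := by
  induction p with
  | nil => simp [NlPathAct]
  | cons p γ ih =>
    simp only [NlPathAct, LinearMap.comp_apply, ih, NlAct_lof, Path.comp_cons]

lemma NrPathAct_lof (a : Q) {b' b : Q} (q : Path b' b) (t : NIdx Q a b) (v : V t.1.1) :
    NrPathAct F V a q (ιN t v) = ιN ⟨t.1, t.2.1, q.comp t.2.2⟩ v := by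
  induction q with
  | nil => rw [Path.nil_comp, NrPathAct, LinearMap.id_apply]
  | cons q δ ih =>
    rw [NrPathAct, LinearMap.comp_apply, NrAct_lof, ih, ← Path.comp_assoc,
      Path.comp_toPath_eq_cons]

abbrev NIdx.diag (ar : Arr Q) : NIdx Q ar.2.1 ar.1 := ⟨ar, Path.nil, Path.nil⟩

lemma lof_eq_NlPathAct_NrPathAct {a b : Q} (ar : Arr Q) (ω : Path ar.2.1 a)
    (ω' : Path b ar.1) (v : V ar.1) :
    ιN ⟨ar, ω, ω'⟩ v =
      NlPathAct F V ω b (NrPathAct F V ar.2.1 ω' (ιN (NIdx.diag ar) v)) := by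
  rw [NrPathAct_lof, NlPathAct_lof, Path.nil_comp]
  rfl

lemma NlPathAct_apply_of_mem {f : ∀ a b : Q, Nc F Q V a b →ₗ[F] Nc F Q V a b}
    (hf : f ∈ bimodEndN F Q V) {a a' : Q} (p : Path a a') (b : Q) (x : Nc F Q V a b) :
    NlPathAct F V p b (f a b x) = f a' b (NlPathAct F V p b x) := by
  induction p with
  | nil => simp [NlPathAct]
  | cons p γ ih =>
    simp only [NlPathAct, LinearMap.comp_apply, ih]
    exact LinearMap.congr_fun (hf.1 _ _ _ γ) _

lemma NrPathAct_apply_of_mem {f : ∀ a b : Q, Nc F Q V a b →ₗ[F] Nc F Q V a b}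
    (hf : f ∈ bimodEndN F Q V) (a : Q) {b' b : Q} (q : Path b' b) (x : Nc F Q V a b) :
    NrPathAct F V a q (f a b x) = f a b' (NrPathAct F V a q x) := by
  induction q with
  | nil => simp [NrPathAct]
  | cons q δ ih =>
    simp only [NrPathAct, LinearMap.comp_apply, ← ih]
    exact congrArg _ (LinearMap.congr_fun (hf.2 _ _ _ δ) _)

noncomputable def arrowComponent (f : ∀ a b : Q, Nc F Q V a b →ₗ[F] Nc F Q V a b)
    (ar : Arr Q) : V ar.1 →ₗ[F] V ar.1 :=
  (DirectSum.component F _ _ (NIdx.diag ar)).comp ((f ar.2.1 ar.1).comp (ιN (NIdx.diag ar)))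

variable (F Q V) in
noncomputable def diagonalEnd (g : ∀ ar : Arr Q, V ar.1 →ₗ[F] V ar.1) (a b : Q) :
    Nc F Q V a b →ₗ[F] Nc F Q V a b :=
  DirectSum.lmap fun t => g t.1

lemma diagonalEnd_mem (g : ∀ ar : Arr Q, V ar.1 →ₗ[F] V ar.1) :
    diagonalEnd F Q V g ∈ bimodEndN F Q V := by
  constructor <;>
  · intros
    refine DirectSum.linearMap_ext F fun t => LinearMap.ext fun v => ?_
    simp [diagonalEnd]

lemma arrowComponent_diagonalEnd (g : ∀ ar : Arr Q, V ar.1 →ₗ[F] V ar.1) :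
    arrowComponent (diagonalEnd F Q V g) = g := by
  ext ar v
  simp [arrowComponent, diagonalEnd]

variable (F Q V) in
lemma id_mem_bimodEndN : (fun _ _ => LinearMap.id) ∈ bimodEndN F Q V :=
  ⟨fun _ _ _ _ => rfl, fun _ _ _ _ => rfl⟩

lemma comp_mem_bimodEndN {f g : ∀ a b : Q, Nc F Q V a b →ₗ[F] Nc F Q V a b}
    (hf : f ∈ bimodEndN F Q V) (hg : g ∈ bimodEndN F Q V) :
    (fun a b => (f a b).comp (g a b)) ∈ bimodEndN F Q V := by
  constructor
  · intro a a' b γ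
    rw [← LinearMap.comp_assoc, hf.1, LinearMap.comp_assoc, hg.1, LinearMap.comp_assoc]
  · intro a b b' δ
    rw [← LinearMap.comp_assoc, hf.2, LinearMap.comp_assoc, hg.2, LinearMap.comp_assoc]

lemma arrowComponent_id (ar : Arr Q) :
    arrowComponent (fun a b => (LinearMap.id : Nc F Q V a b →ₗ[F] Nc F Q V a b)) ar =
      LinearMap.id := by
  ext v
  simp [arrowComponent]

variable [∀ a b : Q, Subsingleton (Path a b)]

lemma NIdx.eq_diag {i j : Q} (α : i ⟶ j) (s : NIdx Q j i) : s = NIdx.diag ⟨i, j, α⟩ := by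
  obtain ⟨⟨i', j', α'⟩, ω, ω'⟩ := s
  have hα : (ω'.comp α'.toPath).comp ω = α.toPath := Subsingleton.elim _ _
  have hlen := congrArg Path.length hα
  simp only [Path.length_comp, Path.length_toPath] at hlen
  obtain rfl : i = i' := ω'.eq_of_length_zero (by omega)
  obtain rfl : j' = j := ω.eq_of_length_zero (by omega)
  obtain rfl := ω.eq_nil_of_length_zero (by omega)
  obtain rfl := ω'.eq_nil_of_length_zero (by omega)
  simp only [Path.nil_comp, Path.comp_nil, Hom.toPath, Path.cons.injEq, heq_eq_eq,
    true_and] at hα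
  rw [hα]

instance NIdx.subsingleton_diag (ar : Arr Q) : Subsingleton (NIdx Q ar.2.1 ar.1) :=
  ⟨fun s s' => (NIdx.eq_diag ar.2.2 s).trans (NIdx.eq_diag ar.2.2 s').symm⟩

lemma apply_lof_diag (f : ∀ a b : Q, Nc F Q V a b →ₗ[F] Nc F Q V a b) (ar : Arr Q)
    (v : V ar.1) :
    f ar.2.1 ar.1 (ιN (NIdx.diag ar) v) = ιN (NIdx.diag ar) (arrowComponent f ar v) :=
  DirectSum.eq_lof_of_subsingleton F _ _

lemma arrowComponent_comp (f g : ∀ a b : Q, Nc F Q V a b →ₗ[F] Nc F Q V a b) (ar : Arr Q) :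
    arrowComponent (fun a b => (f a b).comp (g a b)) ar =
      (arrowComponent f ar).comp (arrowComponent g ar) := by
  ext v
  simp only [arrowComponent, LinearMap.comp_apply]
  rw [apply_lof_diag g, DirectSum.component.lof_self]

lemma apply_lof_of_mem {f : ∀ a b : Q, Nc F Q V a b →ₗ[F] Nc F Q V a b}
    (hf : f ∈ bimodEndN F Q V) {a b : Q} (t : NIdx Q a b) (v : V t.1.1) :
    f a b (ιN t v) = ιN t (arrowComponent f t.1 v) := by
  obtain ⟨ar, ω, ω'⟩ := t
  calc f a b (ιN ⟨ar, ω, ω'⟩ v)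
      = f a b (NlPathAct F V ω b (NrPathAct F V ar.2.1 ω' (ιN (NIdx.diag ar) v))) := by
        rw [lof_eq_NlPathAct_NrPathAct]
    _ = NlPathAct F V ω b (NrPathAct F V ar.2.1 ω' (f _ _ (ιN (NIdx.diag ar) v))) := by
        rw [NrPathAct_apply_of_mem hf, NlPathAct_apply_of_mem hf]
    _ = ιN ⟨ar, ω, ω'⟩ (arrowComponent f ar v) := by
        rw [apply_lof_diag, ← lof_eq_NlPathAct_NrPathAct]

lemma eq_diagonalEnd_of_mem {f : ∀ a b : Q, Nc F Q V a b →ₗ[F] Nc F Q V a b}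
    (hf : f ∈ bimodEndN F Q V) :
    f = diagonalEnd F Q V (arrowComponent f) := by
  ext a b : 2
  refine DirectSum.linearMap_ext F fun t => LinearMap.ext fun v => ?_
  simp [apply_lof_of_mem hf, diagonalEnd]

variable (F V) in
noncomputable def bimodEndNEquiv :
    bimodEndN F Q V ≃ₗ[F] ∀ ar : Arr Q, V ar.1 →ₗ[F] V ar.1 where
  toFun f := arrowComponent f.1
  map_add' f g := by ext; simp [arrowComponent]
  map_smul' c f := by ext; simp [arrowComponent]
  invFun g := ⟨diagonalEnd F Q V g, diagonalEnd_mem g⟩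
  left_inv f := Subtype.ext (eq_diagonalEnd_of_mem f.2).symm
  right_inv := arrowComponent_diagonalEnd

end BimodEndN

/-- `End_{A ⊗ A^op}(N(V_*)) ≅ ⊕_{α : i → j} End_k(V_i)` as `k`-algebras:
there is a `k`-linear equivalence which is moreover multiplicative and unital. -/
theorem bimodEndN_iso (F : Type) [Field F] (Q : Type) [Quiver.{0} Q]
    [Fintype Q] [∀ a b : Q, Fintype (a ⟶ b)]
    (hacyclic : ∀ (a : Q) (p : Path a a), p = Path.nil)
    (hnopar : ∀ (a b : Q) (p q : Path a b), p = q)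
    (V : Q → Type) [∀ p, AddCommGroup (V p)] [∀ p, Module F (V p)]
    [∀ p, FiniteDimensional F (V p)] :
    ∃ e : ↥(bimodEndN F Q V) ≃ₗ[F] (∀ ar : Arr Q, V ar.1 →ₗ[F] V ar.1),
      (∀ f g : ↥(bimodEndN F Q V), ∃ h : ↥(bimodEndN F Q V),
        (∀ a b : Q, h.val a b = (f.val a b).comp (g.val a b)) ∧
        (∀ ar : Arr Q, e h ar = (e f ar).comp (e g ar))) ∧
      (∃ one : ↥(bimodEndN F Q V),
        (∀ a b : Q, one.val a b = LinearMap.id) ∧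
        (∀ ar : Arr Q, e one ar = LinearMap.id)) :=
  have : ∀ a b : Q, Subsingleton (Path a b) := fun a b => ⟨hnopar a b⟩
  ⟨bimodEndNEquiv F V,
    fun f g =>
      ⟨⟨_, comp_mem_bimodEndN f.2 g.2⟩, fun _ _ => rfl, arrowComponent_comp f.1 g.1⟩,
    ⟨⟨_, id_mem_bimodEndN F Q V⟩, fun _ _ => rfl, arrowComponent_id⟩⟩
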